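/- Let X be a random variable with logconcave density f : ℝ → ℝ≥0 and maximum value M_f. Then for every c > 0, P(f(X) ≤ c) ≤ c / M_f. -/

import Mathlib

/-!
Fix `M' < M` and a point `x₀` with `M' < f x₀`. Superlevel sets of a log-concave function are
intervals, so to the right of `x₀` the set `{f ≤ c}` is a half-line starting at some `b ≥ x₀`.
Log-concavity squeezes `f` against the log-linear function `e` with `e x₀ = M'` and `e b = c`:
`f ≥ e` on `[x₀, b]` and `f ≤ e` beyond `b`. Integrating `e` gives
`∫_b^∞ f ≤ c (b - x₀) / log (M' / c)` and `∫_{x₀}^b f ≥ (M' - c) (b - x₀) / log (M' / c)`, hence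
`M' ∫_{[x₀, ∞) ∩ {f ≤ c}} f ≤ c ∫_{x₀}^∞ f`. As nothing is known about `f b` itself, both bounds
are proved for the curves through `(u, c)` with `u` near `b` and then passed to the limit.
Reflecting `f` gives the same inequality left of `x₀`; adding the two and letting `M' → M` yields
the claim.
-/

open MeasureTheory Set Filter Real Topology

theorem exp_neg_mul_sub (k x₀ t : ℝ) : exp (-k * (t - x₀)) = exp (k * x₀) * exp (-k * t) := by
  rw [← exp_add]; ring_nf

theorem integrableOn_Ioi_mul_exp_neg_mul_sub (C x₀ u : ℝ) {k : ℝ} (hk : 0 < k) :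
    IntegrableOn (fun t => C * exp (-k * (t - x₀))) (Ioi u) := by
  simp_rw [exp_neg_mul_sub, ← mul_assoc]
  exact (integrableOn_exp_mul_Ioi (neg_lt_zero.2 hk) u).const_mul _

theorem integral_Ioi_mul_exp_neg_mul_sub (C x₀ u : ℝ) {k : ℝ} (hk : 0 < k) :
    ∫ t in Ioi u, C * exp (-k * (t - x₀)) = C / k * exp (-k * (u - x₀)) := by
  simp_rw [exp_neg_mul_sub, ← mul_assoc, integral_const_mul,
    integral_exp_mul_Ioi (neg_lt_zero.2 hk)]
  rw [neg_div_neg_eq]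
  ring

theorem intervalIntegral_mul_exp_neg_mul_sub (C x₀ u : ℝ) {k : ℝ} (hk : 0 < k) :
    ∫ t in x₀..u, C * exp (-k * (t - x₀)) = C / k * (1 - exp (-k * (u - x₀))) := by
  rw [intervalIntegral.integral_const_mul,
    intervalIntegral.integral_comp_sub_right (fun t => exp (-k * t)),
    intervalIntegral.integral_comp_mul_left (fun t => exp t) (neg_ne_zero.2 hk.ne'), integral_exp]
  simp only [sub_self, mul_zero, exp_zero, smul_eq_mul]
  field_simp
  ring

theorem mul_exp_neg_log_div_div_mul {M c d : ℝ} (hM : 0 < M) (hc : 0 < c) (hd : d ≠ 0) :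
    M * exp (-(log (M / c) / d) * d) = c := by
  rw [neg_mul, div_mul_cancel₀ _ hd, exp_neg, exp_log (div_pos hM hc)]
  field_simp

theorem IsUpperSet.Ioi_csInf_subset {α : Type*} [ConditionallyCompleteLinearOrder α]
    {s : Set α} (hs : IsUpperSet s) (hne : s.Nonempty) (hbdd : BddBelow s) :
    Ioi (sInf s) ⊆ s := fun _ ht =>
  let ⟨_, hu, hut⟩ := (csInf_lt_iff hbdd hne).1 ht
  hs hut.le hu

def LogConcave (f : ℝ → ℝ) : Prop :=
  ∀ x y l : ℝ, 0 ≤ l → l ≤ 1 → f x ^ l * f y ^ (1 - l) ≤ f (l * x + (1 - l) * y)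

namespace LogConcave

variable {f : ℝ → ℝ}

theorem comp_neg (hf : LogConcave f) : LogConcave fun x => f (-x) := by
  intro x y l hl₀ hl₁
  simpa only [mul_neg, neg_add] using hf (-x) (-y) l hl₀ hl₁

theorem rpow_mul_rpow_le {x u t : ℝ} (hf : LogConcave f) (hxt : x < t) (hu : u ∈ Icc x t) :
    f x ^ ((t - u) / (t - x)) * f t ^ ((u - x) / (t - x)) ≤ f u := by
  have htx : 0 < t - x := sub_pos.2 hxt
  convert hf x t ((t - u) / (t - x)) (div_nonneg (by linarith [hu.2]) htx.le)
    ((div_le_one htx).2 (by linarith [hu.1])) using 3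
  · field_simp; ring
  · field_simp; ring

theorem quasiconcaveOn (hf : LogConcave f) (h0 : ∀ x, 0 ≤ f x) : QuasiconcaveOn ℝ univ f := by
  rintro r x ⟨-, hx⟩ y ⟨-, hy⟩ a b ha hb hab
  refine ⟨mem_univ _, ?_⟩
  obtain rfl : b = 1 - a := by linarith
  set m := min (f x) (f y)
  have hm : 0 ≤ m := le_min (h0 x) (h0 y)
  calc r ≤ m := le_min hx hy
    _ = m ^ a * m ^ (1 - a) := by rw [← rpow_add' hm (by simp), add_sub_cancel, rpow_one]
    _ ≤ f x ^ a * f y ^ (1 - a) := by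
        gcongr ?_ ^ _ * ?_ ^ _
        exacts [rpow_nonneg (h0 x) a, min_le_left _ _, min_le_right _ _]
    _ ≤ f (a • x + (1 - a) • y) := hf x y a ha (by linarith)

theorem isUpperSet_Ici_inter (hf : LogConcave f) (h0 : ∀ x, 0 ≤ f x) {x₀ c : ℝ}
    (hx₀ : c < f x₀) : IsUpperSet (Ici x₀ ∩ {t | f t ≤ c}) := by
  rintro t u htu ⟨hxt, ht⟩
  have hT : OrdConnected {x | c < f x} := by
    simpa using ((hf.quasiconcaveOn h0).convex_gt c).ordConnected
  refine ⟨hxt.trans htu, show f u ≤ c from not_lt.1 fun hu => ?_⟩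
  have hct : c < f t := hT.out hx₀ hu ⟨hxt, htu⟩
  exact not_le.2 hct ht

theorem apply_le_mul_exp (hf : LogConcave f) (h0 : ∀ x, 0 ≤ f x) {x₀ u t M c : ℝ}
    (hM : 0 < M) (hc : 0 < c) (hx₀ : M ≤ f x₀) (hu : f u ≤ c) (hxu : x₀ < u) (hut : u ≤ t) :
    f t ≤ M * exp (-(log (M / c) / (u - x₀)) * (t - x₀)) := by
  have hux : 0 < u - x₀ := sub_pos.2 hxu
  have htx : 0 < t - x₀ := by linarith
  have hμ : 0 < (u - x₀) / (t - x₀) := div_pos hux htx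
  have key : M ^ ((t - u) / (t - x₀)) * f t ^ ((u - x₀) / (t - x₀)) ≤ c := by
    refine le_trans ?_ ((hf.rpow_mul_rpow_le (hxu.trans_le hut) ⟨hxu.le, hut⟩).trans hu)
    gcongr
    exact rpow_nonneg (h0 t) _
  rw [← rpow_le_rpow_iff (h0 t) (by positivity) hμ]
  calc f t ^ ((u - x₀) / (t - x₀)) ≤ c / M ^ ((t - u) / (t - x₀)) := by
        rw [le_div_iff₀ (by positivity)]; linarith
    _ = _ := by
        rw [rpow_def_of_pos hM, rpow_def_of_pos (by positivity), log_mul hM.ne' (exp_pos _).ne',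
          log_exp, log_div hM.ne' hc.ne', ← exp_log hc, ← exp_sub, log_exp]
        congr 1
        field_simp
        ring

theorem mul_exp_le_apply (hf : LogConcave f) {x₀ u s M c : ℝ}
    (hM : 0 < M) (hc : 0 < c) (hx₀ : M ≤ f x₀) (hu : c ≤ f u) (hxu : x₀ < u) (hs : s ∈ Icc x₀ u) :
    M * exp (-(log (M / c) / (u - x₀)) * (s - x₀)) ≤ f s := by
  have hux : 0 < u - x₀ := sub_pos.2 hxu
  calc M * exp (-(log (M / c) / (u - x₀)) * (s - x₀))
      = M ^ ((u - s) / (u - x₀)) * c ^ ((s - x₀) / (u - x₀)) := by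
        rw [rpow_def_of_pos hM, rpow_def_of_pos hc, ← exp_add, log_div hM.ne' hc.ne']
        nth_rewrite 1 [← exp_log hM]
        rw [← exp_add]
        congr 1
        field_simp
        ring
    _ ≤ f x₀ ^ ((u - s) / (u - x₀)) * f u ^ ((s - x₀) / (u - x₀)) := by
        have := hs.1; have := hs.2
        gcongr
        exact rpow_nonneg (hM.le.trans hx₀) _
    _ ≤ f s := hf.rpow_mul_rpow_le hxu hs

theorem integral_Ioi_le (hf : LogConcave f) (h0 : ∀ x, 0 ≤ f x) (hint : Integrable f)
    {x₀ b M c : ℝ} (hc : 0 < c) (hcM : c < M) (hx₀ : M ≤ f x₀) (hxb : x₀ ≤ b)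
    (hb : ∀ t, b < t → f t ≤ c) :
    ∫ t in Ioi b, f t ≤ c * (b - x₀) / log (M / c) := by
  have hM : 0 < M := hc.trans hcM
  have hL : 0 < log (M / c) := log_pos ((one_lt_div hc).2 hcM)
  have bound : ∀ u ∈ Ioi b, ∫ t in Ioi b, f t ≤ c * (u - b) + c * (u - x₀) / log (M / c) := by
    intro u hu
    have hxu : x₀ < u := hxb.trans_lt hu
    set k := log (M / c) / (u - x₀)
    have hk : 0 < k := div_pos hL (sub_pos.2 hxu)
    have hMk : M * exp (-k * (u - x₀)) = c := mul_exp_neg_log_div_div_mul hM hc (sub_pos.2 hxu).ne'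
    rw [← intervalIntegral.integral_interval_add_Ioi hint.integrableOn hint.integrableOn]
    gcongr
    · calc ∫ t in b..u, f t ≤ ∫ t in b..u, c :=
            intervalIntegral.integral_mono_on_of_le_Ioo (le_of_lt hu) hint.intervalIntegrable
              intervalIntegrable_const fun t ht => hb t ht.1
        _ = c * (u - b) := by simp [mul_comm]
    · calc ∫ t in Ioi u, f t ≤ ∫ t in Ioi u, M * exp (-k * (t - x₀)) := by
            refine setIntegral_mono_on hint.integrableOn
              (integrableOn_Ioi_mul_exp_neg_mul_sub _ _ _ hk) measurableSet_Ioi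
              fun t ht => hf.apply_le_mul_exp h0 hM hc hx₀ (hb u hu) hxu (le_of_lt ht)
        _ = c * (u - x₀) / log (M / c) := by
            rw [integral_Ioi_mul_exp_neg_mul_sub _ _ _ hk, div_mul_eq_mul_div, hMk]
            simp only [k, div_div_eq_mul_div]
  have hcont : Continuous fun u => c * (u - b) + c * (u - x₀) / log (M / c) := by fun_prop
  simpa using
    ge_of_tendsto (hcont.continuousWithinAt (x := b)) (eventually_nhdsWithin_of_forall bound)

theorem le_intervalIntegral (hf : LogConcave f) (h0 : ∀ x, 0 ≤ f x) (hint : Integrable f)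
    {x₀ b M c : ℝ} (hc : 0 < c) (hcM : c < M) (hx₀ : M ≤ f x₀) (hxb : x₀ ≤ b)
    (hb : ∀ s ∈ Ioo x₀ b, c ≤ f s) :
    (M - c) * (b - x₀) / log (M / c) ≤ ∫ s in x₀..b, f s := by
  obtain rfl | hxb := hxb.eq_or_lt
  · simp
  have hM : 0 < M := hc.trans hcM
  have hL : 0 < log (M / c) := log_pos ((one_lt_div hc).2 hcM)
  have bound : ∀ u ∈ Ioo x₀ b, (M - c) * (u - x₀) / log (M / c) ≤ ∫ s in x₀..b, f s := by
    intro u hu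
    set k := log (M / c) / (u - x₀)
    have hk : 0 < k := div_pos hL (sub_pos.2 hu.1)
    have hMk : M * exp (-k * (u - x₀)) = c := mul_exp_neg_log_div_div_mul hM hc (sub_pos.2 hu.1).ne'
    calc (M - c) * (u - x₀) / log (M / c) = ∫ s in x₀..u, M * exp (-k * (s - x₀)) := by
          rw [intervalIntegral_mul_exp_neg_mul_sub _ _ _ hk, div_mul_eq_mul_div, mul_one_sub, hMk]
          simp only [k, div_div_eq_mul_div]
      _ ≤ ∫ s in x₀..u, f s :=
          intervalIntegral.integral_mono_on hu.1.le
            ((by fun_prop : Continuous fun s => M * exp (-k * (s - x₀))).intervalIntegrable _ _)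
            hint.intervalIntegrable
            fun s hs => hf.mul_exp_le_apply hM hc hx₀ (hb u hu) hu.1 hs
      _ ≤ ∫ s in x₀..b, f s :=
          intervalIntegral.integral_mono_interval le_rfl hu.1.le hu.2.le
            (ae_of_all _ fun s => h0 s) hint.intervalIntegrable
  have hcont : Continuous fun u => (M - c) * (u - x₀) / log (M / c) := by fun_prop
  exact le_of_tendsto (hcont.continuousWithinAt (x := b))
    (mem_of_superset (Ioo_mem_nhdsLT hxb) bound)

theorem mul_integral_Ici_inter_le (hf : LogConcave f) (h0 : ∀ x, 0 ≤ f x) (hint : Integrable f)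
    {x₀ M c : ℝ} (hc : 0 < c) (hx₀ : M ≤ f x₀) :
    M * ∫ t in Ici x₀ ∩ {t | f t ≤ c}, f t ≤ c * ∫ t in Ici x₀, f t := by
  set S := Ici x₀ ∩ {t | f t ≤ c}
  have hSf : ∫ t in S, f t ≤ ∫ t in Ici x₀, f t :=
    setIntegral_mono_set hint.integrableOn (ae_of_all _ h0) inter_subset_left.eventuallyLE
  obtain hMc | hcM := le_or_gt M c
  · calc M * ∫ t in S, f t ≤ c * ∫ t in S, f t := by gcongr; exact integral_nonneg h0
      _ ≤ c * ∫ t in Ici x₀, f t := by gcongr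
  obtain hSe | hSne := S.eq_empty_or_nonempty
  · rw [hSe, Measure.restrict_empty, integral_zero_measure, mul_zero]
    exact mul_nonneg hc.le (integral_nonneg h0)
  have hbdd : BddBelow S := ⟨x₀, fun t ht => ht.1⟩
  set b := sInf S
  have hxb : x₀ ≤ b := le_csInf hSne fun t ht => ht.1
  have hIoi := (hf.isUpperSet_Ici_inter h0 (hcM.trans_le hx₀)).Ioi_csInf_subset hSne hbdd
  have hIoo (s : ℝ) (hs : s ∈ Ioo x₀ b) : c ≤ f s :=
    le_of_lt <| not_le.1 fun h => notMem_of_lt_csInf hs.2 hbdd ⟨hs.1.le, h⟩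
  have hSb : ∫ t in S, f t ≤ ∫ t in Ioi b, f t := by
    rw [← integral_Ici_eq_integral_Ioi]
    exact setIntegral_mono_set hint.integrableOn (ae_of_all _ h0)
      (show S ⊆ Ici b from fun _ ht => csInf_le hbdd ht).eventuallyLE
  have htail := hf.integral_Ioi_le h0 hint hc hcM hx₀ hxb fun t ht => (hIoi ht).2
  have hmid := hf.le_intervalIntegral h0 hint hc hcM hx₀ hxb hIoo
  rw [integral_Ici_eq_integral_Ioi,
    ← intervalIntegral.integral_interval_add_Ioi hint.integrableOn hint.integrableOn]
  set T := ∫ t in Ioi b, f t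
  calc M * ∫ t in S, f t ≤ M * T := by gcongr; linarith
    _ = (M - c) * T + c * T := by ring
    _ ≤ (M - c) * (c * (b - x₀) / log (M / c)) + c * T := by gcongr
    _ = c * ((M - c) * (b - x₀) / log (M / c)) + c * T := by ring
    _ ≤ c * ((∫ t in x₀..b, f t) + T) := by rw [mul_add]; gcongr

theorem mul_integral_Iic_inter_le (hf : LogConcave f) (h0 : ∀ x, 0 ≤ f x) (hint : Integrable f)
    {x₀ M c : ℝ} (hc : 0 < c) (hx₀ : M ≤ f x₀) :
    M * ∫ t in Iic x₀ ∩ {t | f t ≤ c}, f t ≤ c * ∫ t in Iic x₀, f t := by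
  have h := hf.comp_neg.mul_integral_Ici_inter_le (fun x => h0 (-x)) hint.comp_neg hc
    (x₀ := -x₀) (M := M) (by rwa [neg_neg])
  have hneg (s : Set ℝ) : ∫ t in Neg.neg ⁻¹' s, f (-t) = ∫ t in s, f t :=
    (Measure.measurePreserving_neg volume).setIntegral_preimage_emb measurableEmbedding_neg f s
  have hS : Ici (-x₀) ∩ {t | f (-t) ≤ c} = Neg.neg ⁻¹' (Iic x₀ ∩ {t | f t ≤ c}) := by
    ext; simp
  have hI : Ici (-x₀) = Neg.neg ⁻¹' Iic x₀ := by ext; simp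
  rwa [hS, hI, hneg, hneg] at h

end LogConcave

/-- if `X` has a logconcave density `f` with maximum value `M > 0`,
then for every `c > 0`, `P(f(X) ≤ c) ≤ c / M`. -/
theorem stmt3 (f : ℝ → ℝ) (M : ℝ)
    (hf_nonneg : ∀ x, 0 ≤ f x)
    (hf_density : ∫ x, f x = 1)
    (hf_logconcave : ∀ x y l : ℝ, 0 ≤ l → l ≤ 1 →
      f x ^ l * f y ^ (1 - l) ≤ f (l * x + (1 - l) * y))
    (hM : IsLUB (Set.range f) M) (hMpos : 0 < M) :
    ∀ c : ℝ, 0 < c → ∫ x in {x : ℝ | f x ≤ c}, f x ≤ c / M := by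
  intro c hc
  have hint : Integrable f := .of_integral_ne_zero (by simp [hf_density])
  set A := {x : ℝ | f x ≤ c}
  have key : ∀ M' ∈ Iio M, M' * ∫ x in A, f x ≤ c := by
    intro M' hM'
    obtain ⟨_, ⟨x₀, rfl⟩, hx₀, -⟩ := hM.exists_between hM'
    have hsplit : ∫ x in A, f x = (∫ x in Iic x₀ ∩ A, f x) + ∫ x in Ici x₀ ∩ A, f x := by
      rw [← intervalIntegral.integral_Iic_add_Ioi (hint.restrict (s := A)).integrableOn
          (hint.restrict (s := A)).integrableOn,
        Measure.restrict_restrict measurableSet_Iic, Measure.restrict_restrict measurableSet_Ioi,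
        setIntegral_congr_set (Ioi_ae_eq_Ici.inter (ae_eq_refl A))]
    have htotal : (∫ x in Iic x₀, f x) + ∫ x in Ici x₀, f x = 1 := by
      rw [integral_Ici_eq_integral_Ioi, intervalIntegral.integral_Iic_add_Ioi hint.integrableOn
        hint.integrableOn, hf_density]
    have hleft := LogConcave.mul_integral_Iic_inter_le hf_logconcave hf_nonneg hint hc hx₀.le
    have hright := LogConcave.mul_integral_Ici_inter_le hf_logconcave hf_nonneg hint hc hx₀.le
    calc M' * ∫ x in A, f x
        = M' * (∫ x in Iic x₀ ∩ A, f x) + M' * ∫ x in Ici x₀ ∩ A, f x := by rw [hsplit, mul_add]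
      _ ≤ c * (∫ x in Iic x₀, f x) + c * ∫ x in Ici x₀, f x := add_le_add hleft hright
      _ = c := by rw [← mul_add, htotal, mul_one]
  rw [le_div_iff₀ hMpos, mul_comm]
  exact le_of_tendsto ((continuous_mul_const _).continuousWithinAt (x := M))
    (eventually_nhdsWithin_of_forall key)
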